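/- arXiv:2406.07984 — 2 statements merged into one kernel-verified Lean document; each statement's English description precedes it below -/
import Mathlib

section
/- For every R > 0 and every r > 0, ∫_{ℝ²} min(|ξ|² r², 4)/(|ξ|²(1 + R²|ξ|²)) dξ ≤ C ln(2 + r/R) for an absolute constant C. -/
/-!
In polar coordinates the integral is `2π ∫₀^∞ y k(y) dy`, where
`k(y) = min(y²r², 4) / (y²(1 + R²y²))`. On `(0, 1/r]` we bound `y k(y) ≤ r²y`, which
contributes `1/2`; on `(1/r, ∞)` we bound `y k(y) ≤ 4 / (y(1 + R²y²))`, whose integral is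
exactly `2 log(1 + r²/R²) ≤ 4 log(2 + r/R)`, via the antiderivative `log y - log(1 + R²y²)/2`.
Since `log(2 + r/R) ≥ log 2 > 1/2`, the total is at most `10π log(2 + r/R)`.
-/

open MeasureTheory Set Filter Topology Real

theorem integral_fun_norm_euclideanSpace_fin_two (f : ℝ → ℝ) :
    ∫ ξ : EuclideanSpace ℝ (Fin 2), f ‖ξ‖ = 2 * π * ∫ y in Ioi 0, y * f y := by
  rw [integral_fun_norm_addHaar, finrank_euclideanSpace_fin, measureReal_def,
    EuclideanSpace.volume_ball_fin_two]
  simp [mul_assoc, pi_pos.le]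

section

variable {c : ℝ}

theorem hasDerivAt_log_sub_half_log_one_add_mul_sq (hc : 0 ≤ c) {y : ℝ} (hy : 0 < y) :
    HasDerivAt (fun y => log y - log (1 + c * y ^ 2) / 2) (y * (1 + c * y ^ 2))⁻¹ y := by
  have hpos : 0 < 1 + c * y ^ 2 := by positivity
  refine ((hasDerivAt_log hy.ne').sub
    (((((hasDerivAt_pow 2 y).const_mul c).const_add 1).log hpos.ne').div_const 2)).congr_deriv ?_
  field_simp
  ring

theorem tendsto_log_sub_half_log_one_add_mul_sq (hc : 0 < c) :
    Tendsto (fun y => log y - log (1 + c * y ^ 2) / 2) atTop (𝓝 (-log c / 2)) := by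
  have h : Tendsto (fun y : ℝ => -log ((y ^ 2)⁻¹ + c) / 2) atTop (𝓝 (-log (0 + c) / 2)) :=
    (((continuousAt_log (by positivity)).tendsto.comp
      ((tendsto_pow_atTop two_ne_zero).inv_tendsto_atTop.add_const c)).neg).div_const 2
  rw [zero_add] at h
  refine h.congr' ?_
  filter_upwards [eventually_gt_atTop 0] with y hy
  rw [show (y ^ 2)⁻¹ + c = (1 + c * y ^ 2) / y ^ 2 by field_simp,
    log_div (by positivity) (by positivity), log_pow]
  push_cast
  ring

theorem integral_Ioi_inv_mul_one_add_mul_sq (hc : 0 < c) {a : ℝ} (ha : 0 < a) :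
    ∫ y in Ioi a, (y * (1 + c * y ^ 2))⁻¹ = log (1 + (c * a ^ 2)⁻¹) / 2 := by
  rw [integral_Ioi_of_hasDerivAt_of_nonneg'
    (fun y hy => hasDerivAt_log_sub_half_log_one_add_mul_sq hc.le (ha.trans_le hy))
    (fun y hy => by have := ha.trans hy; positivity) (tendsto_log_sub_half_log_one_add_mul_sq hc)]
  rw [show 1 + (c * a ^ 2)⁻¹ = (1 + c * a ^ 2) / (c * a ^ 2) by field_simp; ring,
    log_div (by positivity) (by positivity), log_mul hc.ne' (by positivity), log_pow]
  push_cast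
  ring

theorem integrableOn_Ioi_inv_mul_one_add_mul_sq (hc : 0 < c) {a : ℝ} (ha : 0 < a) :
    IntegrableOn (fun y => (y * (1 + c * y ^ 2))⁻¹) (Ioi a) :=
  integrableOn_Ioi_deriv_of_nonneg'
    (fun y hy => hasDerivAt_log_sub_half_log_one_add_mul_sq hc.le (ha.trans_le hy))
    (fun y hy => by have := ha.trans hy; positivity) (tendsto_log_sub_half_log_one_add_mul_sq hc)

end

theorem setIntegral_Ioi_le_of_le_on_Ioc_of_le_on_Ioi {f u v : ℝ → ℝ} {a : ℝ} (ha : 0 ≤ a)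
    (hf : ∀ y ∈ Ioi 0, 0 ≤ f y) (hu : IntegrableOn u (Ioc 0 a)) (hv : IntegrableOn v (Ioi a))
    (hfu : ∀ y ∈ Ioc 0 a, f y ≤ u y) (hfv : ∀ y ∈ Ioi a, f y ≤ v y) :
    ∫ y in Ioi 0, f y ≤ (∫ y in Ioc 0 a, u y) + ∫ y in Ioi a, v y := by
  by_cases hfi : IntegrableOn f (Ioi 0)
  · rw [← Ioc_union_Ioi_eq_Ioi ha, setIntegral_union (Ioc_disjoint_Ioi le_rfl) measurableSet_Ioi
      (hfi.mono_set Ioc_subset_Ioi_self) (hfi.mono_set (Ioi_subset_Ioi ha))]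
    exact add_le_add
      (setIntegral_mono_on (hfi.mono_set Ioc_subset_Ioi_self) hu measurableSet_Ioc hfu)
      (setIntegral_mono_on (hfi.mono_set (Ioi_subset_Ioi ha)) hv measurableSet_Ioi hfv)
  · rw [integral_undef hfi]
    exact add_nonneg
      (setIntegral_nonneg measurableSet_Ioc fun y hy => (hf y hy.1).trans (hfu y hy))
      (setIntegral_nonneg measurableSet_Ioi fun y hy => (hf y (ha.trans_lt hy)).trans (hfv y hy))

noncomputable def kernelProfile (r R y : ℝ) : ℝ :=
  min (y ^ 2 * r ^ 2) 4 / (y ^ 2 * (1 + R ^ 2 * y ^ 2))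

theorem kernelProfile_nonneg (r R y : ℝ) : 0 ≤ kernelProfile r R y :=
  div_nonneg (le_min (by positivity) zero_le_four) (by positivity)

section

variable {r R y : ℝ}

theorem mul_kernelProfile_le_sq_mul (hy : 0 < y) : y * kernelProfile r R y ≤ r ^ 2 * y := by
  have h : kernelProfile r R y ≤ y ^ 2 * r ^ 2 / y ^ 2 :=
    div_le_div₀ (by positivity) (min_le_left _ _) (by positivity)
      (le_mul_of_one_le_right (by positivity) (by nlinarith [sq_nonneg (R * y)]))
  rw [mul_div_cancel_left₀ _ (by positivity)] at h
  nlinarith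

theorem mul_kernelProfile_le_four_mul_inv (hy : 0 < y) :
    y * kernelProfile r R y ≤ 4 * (y * (1 + R ^ 2 * y ^ 2))⁻¹ := by
  calc y * kernelProfile r R y ≤ y * (4 / (y ^ 2 * (1 + R ^ 2 * y ^ 2))) := by
        unfold kernelProfile; gcongr; exact min_le_right _ _
    _ = 4 * (y * (1 + R ^ 2 * y ^ 2))⁻¹ := by field_simp

theorem integral_mul_kernelProfile_le (hr : 0 < r) (hR : 0 < R) :
    ∫ y in Ioi 0, y * kernelProfile r R y ≤ 1 / 2 + 2 * log (1 + (r / R) ^ 2) := by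
  have hu : ∫ y in Ioc 0 r⁻¹, r ^ 2 * y = 1 / 2 := by
    rw [← intervalIntegral.integral_of_le (by positivity), intervalIntegral.integral_const_mul,
      integral_id]
    field_simp
    simp
  have hv : ∫ y in Ioi r⁻¹, 4 * (y * (1 + R ^ 2 * y ^ 2))⁻¹ = 2 * log (1 + (r / R) ^ 2) := by
    rw [integral_const_mul, integral_Ioi_inv_mul_one_add_mul_sq (by positivity) (by positivity)]
    field_simp
    ring
  calc ∫ y in Ioi 0, y * kernelProfile r R y
      ≤ (∫ y in Ioc 0 r⁻¹, r ^ 2 * y) + ∫ y in Ioi r⁻¹, 4 * (y * (1 + R ^ 2 * y ^ 2))⁻¹ :=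
        setIntegral_Ioi_le_of_le_on_Ioc_of_le_on_Ioi (by positivity)
          (fun y hy => mul_nonneg hy.out.le (kernelProfile_nonneg r R y))
          (by fun_prop : Continuous fun y => r ^ 2 * y).integrableOn_Ioc
          ((integrableOn_Ioi_inv_mul_one_add_mul_sq (by positivity) (by positivity)).const_mul 4)
          (fun y hy => mul_kernelProfile_le_sq_mul hy.1)
          (fun y hy => mul_kernelProfile_le_four_mul_inv ((inv_pos.2 hr).trans hy))
    _ = 1 / 2 + 2 * log (1 + (r / R) ^ 2) := by rw [hu, hv]

end

theorem log_one_add_sq_le_two_mul_log_two_add {x : ℝ} (hx : 0 ≤ x) :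
    log (1 + x ^ 2) ≤ 2 * log (2 + x) := by
  calc log (1 + x ^ 2) ≤ log ((2 + x) ^ 2) := log_le_log (by positivity) (by nlinarith)
    _ = 2 * log (2 + x) := by rw [log_pow]; norm_num

/-- Kernel estimate: `∫_{ℝ²} min(|ξ|²r², 4)/(|ξ|²(1 + R²|ξ|²)) dξ ≤ C ln(2 + r/R)`
for an absolute constant `C`. -/
theorem kernel_log_estimate :
    ∃ C > 0, ∀ r R : ℝ, 0 < r → 0 < R →
      (∫ ξ : EuclideanSpace ℝ (Fin 2),
          min (‖ξ‖ ^ 2 * r ^ 2) 4 / (‖ξ‖ ^ 2 * (1 + R ^ 2 * ‖ξ‖ ^ 2)))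
        ≤ C * Real.log (2 + r / R) := by
  refine ⟨10 * π, by positivity, fun r R hr hR => ?_⟩
  have hx : 0 ≤ r / R := by positivity
  have hlog : 1 / 2 ≤ log (2 + r / R) := by
    linarith [log_two_gt_d9, log_le_log two_pos (by linarith : (2 : ℝ) ≤ 2 + r / R)]
  calc ∫ ξ : EuclideanSpace ℝ (Fin 2), kernelProfile r R ‖ξ‖
      = 2 * π * ∫ y in Ioi 0, y * kernelProfile r R y :=
        integral_fun_norm_euclideanSpace_fin_two _
    _ ≤ 2 * π * (1 / 2 + 2 * log (1 + (r / R) ^ 2)) := by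
        gcongr; exact integral_mul_kernelProfile_le hr hR
    _ ≤ 2 * π * (1 / 2 + 4 * log (2 + r / R)) := by
        gcongr 2 * π * (1 / 2 + ?_); linarith [log_one_add_sq_le_two_mul_log_two_add hx]
    _ ≤ 10 * π * log (2 + r / R) := by nlinarith [pi_pos]
end

section
/- Let f ∈ Ḣ¹(ℝ²) and for R > 0 let f_{(R)} denote the average of f over the ball B_R. Then there is an absolute constant C such that |f_{(R)} − f_{(1)}| ≤ C‖∇f‖_{L²(ℝ²)} (ln R)^{1/2} for all R ≥ 2. -/
/-!
For `‖y‖ < 1` the fundamental theorem of calculus along the ray gives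
`|f(Ry) - f(y)| ≤ ∫_1^R |∇f(ty)| dt`. Averaging over the unit ball, exchanging the integrals and
rescaling `x = ty` yields `∫_{B_1} |f(Ry) - f(y)| dy ≤ ∫ |∇f(x)| W_R(|x|) dx` with
`W_R(r) = ∫_1^R t^{-n} 1_{r < t} dt`. In the plane `W_R(r) ≤ min(1, 1/r)` for `r < R` and
`W_R(r) = 0` for `r ≥ R`, so `‖W_R‖_{L²}² ≤ π (1 + 2 log R)`; Cauchy–Schwarz, together with
`f_(R) - f_(1) = ⨍_{B_1} (f(Ry) - f(y)) dy`, finishes the proof.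
-/

open MeasureTheory Metric Set Module Real
open scoped ENNReal Pointwise

theorem enorm_sub_le_lintegral_deriv {F : Type*} [NormedAddCommGroup F] [NormedSpace ℝ F]
    [CompleteSpace F] {g : ℝ → F} (hg : Differentiable ℝ g) {a b : ℝ} (hab : a ≤ b) :
    ‖g b - g a‖ₑ ≤ ∫⁻ t in Icc a b, ‖deriv g t‖ₑ := by
  by_cases hint : IntegrableOn (deriv g) (Icc a b)
  · have hftc : ∫ t in a..b, deriv g t = g b - g a :=
      intervalIntegral.integral_deriv_eq_sub (fun t _ => hg t)
        ((intervalIntegrable_iff_integrableOn_Icc_of_le hab).2 hint)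
    rw [← hftc, intervalIntegral.integral_of_le hab, ← restrict_Ioc_eq_restrict_Icc]
    exact enorm_integral_le_lintegral_enorm _
  · have hinf : ¬ HasFiniteIntegral (deriv g) (volume.restrict (Icc a b)) := fun h =>
      hint ⟨(stronglyMeasurable_deriv g).aestronglyMeasurable, h⟩
    rw [HasFiniteIntegral, not_lt, top_le_iff] at hinf
    exact hinf ▸ le_top

theorem enorm_sub_smul_le_lintegral_fderiv {E F : Type*} [NormedAddCommGroup E]
    [NormedSpace ℝ E] [NormedAddCommGroup F] [NormedSpace ℝ F] [CompleteSpace F] {f : E → F}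
    (hf : Differentiable ℝ f) {a b : ℝ} (hab : a ≤ b) {y : E} (hy : ‖y‖ ≤ 1) :
    ‖f (b • y) - f (a • y)‖ₑ ≤ ∫⁻ t in Icc a b, ‖fderiv ℝ f (t • y)‖ₑ := by
  have hderiv : ∀ t, HasDerivAt (fun s : ℝ => f (s • y)) (fderiv ℝ f (t • y) y) t := fun t =>
    (hf (t • y)).hasFDerivAt.comp_hasDerivAt t ((hasDerivAt_id t).smul_const y |>.congr_deriv
      (one_smul ℝ y))
  refine (enorm_sub_le_lintegral_deriv (fun t => (hderiv t).differentiableAt) hab).trans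
    (lintegral_mono fun t => ?_)
  rw [(hderiv t).deriv]
  calc ‖fderiv ℝ f (t • y) y‖ₑ ≤ ‖fderiv ℝ f (t • y)‖ₑ * ‖y‖ₑ :=
        (fderiv ℝ f (t • y)).le_opENorm y
    _ ≤ ‖fderiv ℝ f (t • y)‖ₑ := by
        refine mul_le_of_le_one_right' ?_
        simpa [← ofReal_norm] using hy

theorem abs_setAverage_sub_setAverage_le {α : Type*} [MeasurableSpace α] {μ : Measure α}
    {s : Set α} {f g : α → ℝ} (hf : IntegrableOn f s μ) (hg : IntegrableOn g s μ) :
    |⨍ x in s, f x ∂μ - ⨍ x in s, g x ∂μ| ≤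
      (μ.real s)⁻¹ * (∫⁻ x in s, ‖f x - g x‖ₑ ∂μ).toReal := by
  rw [setAverage_eq, setAverage_eq, ← smul_sub, ← integral_sub hf hg, smul_eq_mul, abs_mul,
    abs_of_nonneg (inv_nonneg.2 measureReal_nonneg)]
  gcongr
  simpa only [Real.norm_eq_abs, Real.enorm_eq_ofReal_abs] using
    norm_integral_le_lintegral_norm fun x => f x - g x

theorem lintegral_enorm_rpow_two_rpow_half {α G : Type*} [MeasurableSpace α] {μ : Measure α}
    [NormedAddCommGroup G] {g : α → G} (hg : Integrable (fun x => ‖g x‖ ^ 2) μ) :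
    (∫⁻ x, ‖g x‖ₑ ^ (2 : ℝ) ∂μ) ^ (1 / 2 : ℝ) = ENNReal.ofReal √(∫ x, ‖g x‖ ^ 2 ∂μ) := by
  simp_rw [← ofReal_norm, ENNReal.ofReal_rpow_of_nonneg (norm_nonneg _) zero_le_two, rpow_two]
  rw [← ofReal_integral_eq_lintegral_ofReal hg (ae_of_all _ fun x => by positivity),
    ENNReal.ofReal_rpow_of_nonneg (integral_nonneg fun x => by positivity) (by norm_num),
    sqrt_eq_rpow]

noncomputable def radialWeight (n : ℕ) (R r : ℝ) : ℝ≥0∞ :=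
  ∫⁻ t in Icc 1 R, (Ioi r).indicator (fun t => ENNReal.ofReal ((t ^ n)⁻¹)) t

section HaarScaling

variable {E : Type*} [NormedAddCommGroup E] [NormedSpace ℝ E] [FiniteDimensional ℝ E]
  [MeasurableSpace E] [BorelSpace E] (μ : Measure E) [μ.IsAddHaarMeasure]

theorem setLIntegral_comp_smul_of_pos (g : E → ℝ≥0∞) (s : Set E) {t : ℝ} (ht : 0 < t) :
    ∫⁻ x in s, g (t • x) ∂μ = ENNReal.ofReal ((t ^ finrank ℝ E)⁻¹) * ∫⁻ x in t • s, g x ∂μ := by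
  have hemb := measurableEmbedding_const_smul₀ (α := E) ht.ne'
  conv_lhs => rw [← hemb.injective.preimage_image s]
  rw [← hemb.lintegral_map, ← hemb.restrict_map, ← image_smul, Measure.map_addHaar_smul μ ht.ne',
    Measure.restrict_smul, lintegral_smul_measure, abs_of_pos (by positivity), smul_eq_mul]

theorem setAverage_ball_eq_setAverage_comp_smul {F : Type*} [NormedAddCommGroup F]
    [NormedSpace ℝ F] (f : E → F) {t : ℝ} (ht : 0 < t) :
    ⨍ x in ball 0 t, f x ∂μ = ⨍ y in ball 0 1, f (t • y) ∂μ := by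
  rw [setAverage_eq, setAverage_eq, Measure.setIntegral_comp_smul_of_pos μ f _ ht,
    smul_unitBall_of_pos ht, measureReal_def, measureReal_def, Measure.addHaar_ball_of_pos μ 0 ht,
    ENNReal.toReal_mul, ENNReal.toReal_ofReal (by positivity), smul_smul, mul_inv, mul_comm]

theorem lintegral_ball_enorm_sub_smul_le {F : Type*} [NormedAddCommGroup F] [NormedSpace ℝ F]
    [CompleteSpace F] {f : E → F} (hf : Differentiable ℝ f) {R : ℝ} (hR : 1 ≤ R) :
    ∫⁻ y in ball 0 1, ‖f (R • y) - f y‖ₑ ∂μ ≤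
      ∫⁻ x, ‖fderiv ℝ f x‖ₑ * radialWeight (finrank ℝ E) R ‖x‖ ∂μ := by
  set c : ℝ → ℝ≥0∞ := fun t => ENNReal.ofReal ((t ^ finrank ℝ E)⁻¹)
  have hDf : Measurable fun x => ‖fderiv ℝ f x‖ₑ := (measurable_fderiv ℝ f).enorm
  have hc : Measurable c := (measurable_id.pow_const _).inv.ennreal_ofReal
  have hkernel : Measurable fun p : ℝ × E => ‖fderiv ℝ f p.2‖ₑ * (Ioi ‖p.2‖).indicator c p.1 :=
    (hDf.comp measurable_snd).mul ((hc.comp measurable_fst).indicator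
      (measurableSet_lt measurable_snd.norm measurable_fst))
  have hscale : ∀ t > 0, ∫⁻ y in ball 0 1, ‖fderiv ℝ f (t • y)‖ₑ ∂μ =
      ∫⁻ x, ‖fderiv ℝ f x‖ₑ * (Ioi ‖x‖).indicator c t ∂μ := by
    intro t ht
    rw [setLIntegral_comp_smul_of_pos μ (fun x => ‖fderiv ℝ f x‖ₑ) _ ht, smul_unitBall_of_pos ht,
      ← lintegral_const_mul' _ _ ENNReal.ofReal_ne_top, ← lintegral_indicator measurableSet_ball]
    congr 1 with x
    by_cases hx : ‖x‖ < t <;> simp [indicator, hx, c, mul_comm]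
  calc ∫⁻ y in ball 0 1, ‖f (R • y) - f y‖ₑ ∂μ
      ≤ ∫⁻ y in ball 0 1, (∫⁻ t in Icc 1 R, ‖fderiv ℝ f (t • y)‖ₑ) ∂μ := by
        refine setLIntegral_mono' measurableSet_ball fun y hy => ?_
        simpa using enorm_sub_smul_le_lintegral_fderiv hf hR (mem_ball_zero_iff.1 hy).le
    _ = ∫⁻ t in Icc 1 R, (∫⁻ y in ball 0 1, ‖fderiv ℝ f (t • y)‖ₑ ∂μ) :=
        lintegral_lintegral_swap (hDf.comp (measurable_snd.smul measurable_fst)).aemeasurable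
    _ = ∫⁻ t in Icc 1 R, (∫⁻ x, ‖fderiv ℝ f x‖ₑ * (Ioi ‖x‖).indicator c t ∂μ) :=
        setLIntegral_congr_fun measurableSet_Icc fun t ht => hscale t (zero_lt_one.trans_le ht.1)
    _ = ∫⁻ x, (∫⁻ t in Icc 1 R, ‖fderiv ℝ f x‖ₑ * (Ioi ‖x‖).indicator c t) ∂μ :=
        lintegral_lintegral_swap hkernel.aemeasurable
    _ = ∫⁻ x, ‖fderiv ℝ f x‖ₑ * radialWeight (finrank ℝ E) R ‖x‖ ∂μ :=
        lintegral_congr fun x => lintegral_const_mul _ (hc.indicator measurableSet_Ioi)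

end HaarScaling

theorem lintegral_Icc_inv_sq_le {a : ℝ} (ha : 0 < a) (b : ℝ) :
    ∫⁻ t in Icc a b, ENNReal.ofReal (t ^ 2)⁻¹ ≤ ENNReal.ofReal a⁻¹ := by
  rcases le_or_gt a b with hab | hba
  · have hpos : ∀ t ∈ uIcc a b, 0 < t := fun t ht => ha.trans_le (by simpa [hab] using ht.1)
    have hcont : ContinuousOn (fun t : ℝ => (t ^ 2)⁻¹) (uIcc a b) :=
      (continuousOn_pow 2).inv₀ fun t ht => (pow_pos (hpos t ht) 2).ne'
    have hderiv : ∀ t ∈ uIcc a b, HasDerivAt (fun s : ℝ => -s⁻¹) (t ^ 2)⁻¹ t := fun t ht => by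
      have h := (hasDerivAt_inv (hpos t ht).ne').neg
      rw [neg_neg] at h
      exact h
    rw [uIcc_of_le hab] at hcont
    rw [← ofReal_integral_eq_lintegral_ofReal (hcont.integrableOn_Icc)
        (ae_of_all _ fun t => by positivity), integral_Icc_eq_integral_Ioc,
      ← intervalIntegral.integral_of_le hab,
      intervalIntegral.integral_eq_sub_of_hasDerivAt hderiv (hcont.intervalIntegrable_of_Icc hab)]
    gcongr
    have : 0 ≤ b⁻¹ := by have := ha.trans_le hab; positivity
    linarith
  · simp [Icc_eq_empty_of_lt hba]

theorem radialWeight_two_le (R r : ℝ) :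
    radialWeight 2 R r ≤ ENNReal.ofReal ((Iio R).indicator (fun r => (max 1 r)⁻¹) r) := by
  rw [radialWeight, lintegral_indicator measurableSet_Ioi,
    Measure.restrict_restrict measurableSet_Ioi]
  by_cases hr : r < R
  · rw [indicator_of_mem (mem_Iio.2 hr)]
    refine (lintegral_mono_set ?_).trans (lintegral_Icc_inv_sq_le (lt_max_of_lt_left one_pos) R)
    exact fun t ⟨hrt, h1t, htR⟩ => ⟨max_le h1t hrt.le, htR⟩
  · have hempty : Ioi r ∩ Icc 1 R = ∅ :=
      eq_empty_of_forall_notMem fun t ⟨hrt, _, htR⟩ => hr (lt_of_lt_of_le hrt htR)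
    simp [hempty]

theorem integral_Ioi_mul_sq_indicator_inv_max {R : ℝ} (hR : 1 ≤ R) :
    ∫ r in Ioi 0, r * (Iio R).indicator (fun r => (max 1 r)⁻¹) r ^ 2 = 1 / 2 + log R := by
  set ψ : ℝ → ℝ := fun r => r * (max 1 r)⁻¹ ^ 2
  have hψ : Continuous ψ := continuous_id.mul <|
    (continuous_const.max continuous_id).inv₀ (fun r => by positivity) |>.pow 2
  have hsupp : ∀ r, r * (Iio R).indicator (fun r => (max 1 r)⁻¹) r ^ 2 = (Iio R).indicator ψ r := by
    intro r; by_cases h : r < R <;> simp [h, ψ]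
  have h01 : ∫ r in 0..1, ψ r = 1 / 2 := by
    rw [intervalIntegral.integral_congr (g := fun r => r) fun r hr => ?_, integral_id]
    · norm_num
    · rw [uIcc_of_le zero_le_one] at hr
      simp [ψ, max_eq_left hr.2]
  have h1R : ∫ r in 1..R, ψ r = log R := by
    rw [intervalIntegral.integral_congr (g := fun r => r⁻¹) fun r hr => ?_,
      integral_inv_of_pos one_pos (by linarith), div_one]
    rw [uIcc_of_le hR] at hr
    have hr0 : r ≠ 0 := by linarith [hr.1]
    simp only [ψ, max_eq_right hr.1]
    field_simp
  simp_rw [hsupp]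
  rw [setIntegral_indicator measurableSet_Iio, Ioi_inter_Iio, ← integral_Ioc_eq_integral_Ioo,
    ← intervalIntegral.integral_of_le (by linarith),
    ← intervalIntegral.integral_add_adjacent_intervals (hψ.intervalIntegrable 0 1)
      (hψ.intervalIntegrable 1 R), h01, h1R]

theorem integral_sq_indicator_inv_max_norm {R : ℝ} (hR : 1 ≤ R) :
    ∫ x : EuclideanSpace ℝ (Fin 2), (Iio R).indicator (fun r => (max 1 r)⁻¹) ‖x‖ ^ 2 =
      π * (1 + 2 * log R) := by
  rw [integral_fun_norm_addHaar volume fun r => (Iio R).indicator (fun r => (max 1 r)⁻¹) r ^ 2]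
  norm_num [measureReal_def, pi_pos.le, integral_Ioi_mul_sq_indicator_inv_max hR]
  ring

theorem lintegral_ball_enorm_sub_smul_le_sqrt {f : EuclideanSpace ℝ (Fin 2) → ℝ}
    (hf : Differentiable ℝ f) (hf2 : Integrable fun x => ‖fderiv ℝ f x‖ ^ 2) {R : ℝ}
    (hR : 1 ≤ R) :
    ∫⁻ y in ball 0 1, ‖f (R • y) - f y‖ₑ ≤
      ENNReal.ofReal (√(∫ x, ‖fderiv ℝ f x‖ ^ 2) * √(π * (1 + 2 * log R))) := by
  set φ : ℝ → ℝ := (Iio R).indicator fun r => (max 1 r)⁻¹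
  have hφ : ∀ r, ENNReal.ofReal (φ r) = ‖φ r‖ₑ := fun r =>
    (Real.enorm_of_nonneg (indicator_nonneg (fun r _ => by positivity) r)).symm
  have hφ2 : ∫ x : EuclideanSpace ℝ (Fin 2), ‖φ ‖x‖‖ ^ 2 = π * (1 + 2 * log R) := by
    simpa only [Real.norm_eq_abs, sq_abs] using integral_sq_indicator_inv_max_norm hR
  -- a non-integrable function has integral `0`
  have hφ2_int : Integrable fun x : EuclideanSpace ℝ (Fin 2) => ‖φ ‖x‖‖ ^ 2 :=
    .of_integral_ne_zero (hφ2 ▸ by have := log_nonneg hR; positivity)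
  have hmeas : AEMeasurable fun x : EuclideanSpace ℝ (Fin 2) => ‖fderiv ℝ f x‖ₑ :=
    (measurable_fderiv ℝ f).enorm.aemeasurable
  calc ∫⁻ y in ball 0 1, ‖f (R • y) - f y‖ₑ
      ≤ ∫⁻ x, ‖fderiv ℝ f x‖ₑ * radialWeight 2 R ‖x‖ := by
        simpa using lintegral_ball_enorm_sub_smul_le volume hf hR
    _ ≤ ∫⁻ x, ‖fderiv ℝ f x‖ₑ * ‖φ ‖x‖‖ₑ := by
        gcongr with x
        exact hφ _ ▸ radialWeight_two_le R ‖x‖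
    _ ≤ (∫⁻ x, ‖fderiv ℝ f x‖ₑ ^ (2 : ℝ)) ^ (1 / 2 : ℝ) *
          (∫⁻ x, ‖φ ‖x‖‖ₑ ^ (2 : ℝ)) ^ (1 / 2 : ℝ) :=
        ENNReal.lintegral_mul_le_Lp_mul_Lq _ Real.HolderConjugate.two_two hmeas
          ((measurable_const.max measurable_id).inv.indicator measurableSet_Iio |>.comp
            measurable_norm).enorm.aemeasurable
    _ = ENNReal.ofReal (√(∫ x, ‖fderiv ℝ f x‖ ^ 2) * √(π * (1 + 2 * log R))) := by
        rw [lintegral_enorm_rpow_two_rpow_half hf2, lintegral_enorm_rpow_two_rpow_half hφ2_int, hφ2,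
          ENNReal.ofReal_mul (sqrt_nonneg _)]

theorem sqrt_pi_mul_one_add_two_mul_log_le {R : ℝ} (hR : 2 ≤ R) :
    √(π * (1 + 2 * log R)) ≤ 2 * π * √(log R) := by
  have hlog : 1 / 2 ≤ log R := by
    linarith [log_two_gt_d9, log_le_log two_pos hR]
  rw [← sqrt_sq (by positivity : 0 ≤ 2 * π), ← sqrt_mul (sq_nonneg _)]
  apply sqrt_le_sqrt
  calc π * (1 + 2 * log R) ≤ π * (4 * π * log R) := by gcongr; nlinarith [pi_gt_three]
    _ = (2 * π) ^ 2 * log R := by ring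

/-- Logarithmic drift of ball averages of an `Ḣ¹(ℝ²)` function:
`|f_{(R)} − f_{(1)}| ≤ C ‖∇f‖_{L²} (ln R)^{1/2}` for all `R ≥ 2`. -/
theorem average_log_drift :
    ∃ C > 0, ∀ f : EuclideanSpace ℝ (Fin 2) → ℝ,
      Differentiable ℝ f →
      LocallyIntegrable f volume →
      Integrable (fun x => ‖fderiv ℝ f x‖ ^ 2) →
      ∀ R : ℝ, 2 ≤ R →
        |(⨍ y in Metric.ball (0 : EuclideanSpace ℝ (Fin 2)) R, f y)
            - ⨍ y in Metric.ball (0 : EuclideanSpace ℝ (Fin 2)) 1, f y|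
          ≤ C * Real.sqrt (∫ x, ‖fderiv ℝ f x‖ ^ 2) * Real.sqrt (Real.log R) := by
  refine ⟨2, two_pos, fun f hf _ hf2 R hR => ?_⟩
  have hR1 : 1 ≤ R := by linarith
  have hball : ∀ g : EuclideanSpace ℝ (Fin 2) → ℝ, Continuous g → IntegrableOn g (ball 0 1) :=
    fun g hg => (hg.locallyIntegrable.integrableOn_isCompact (isCompact_closedBall 0 1)).mono_set
      ball_subset_closedBall
  set D := ∫ x, ‖fderiv ℝ f x‖ ^ 2
  rw [setAverage_ball_eq_setAverage_comp_smul volume f (by linarith)]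
  calc |(⨍ y in ball 0 1, f (R • y)) - ⨍ y in ball 0 1, f y|
      ≤ π⁻¹ * (∫⁻ y in ball 0 1, ‖f (R • y) - f y‖ₑ).toReal := by
        simpa [measureReal_def, pi_pos.le] using abs_setAverage_sub_setAverage_le
          (hball _ (hf.continuous.comp (continuous_id.const_smul R))) (hball f hf.continuous)
    _ ≤ π⁻¹ * (√D * √(π * (1 + 2 * log R))) := by
        gcongr
        exact ENNReal.toReal_le_of_le_ofReal (by positivity)
          (lintegral_ball_enorm_sub_smul_le_sqrt hf hf2 hR1)
    _ ≤ π⁻¹ * (√D * (2 * π * √(log R))) := by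
        gcongr
        exact sqrt_pi_mul_one_add_two_mul_log_le hR
    _ = 2 * √D * √(log R) := by
        field_simp
end
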